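/- Let $\rho(z_1,z_2) = |z_1|^2 - 2\,\mathrm{Re}(z_1 e^{-i\log|z_2|^2}) + \eta(\log|z_2|^2)$ be the defining function of the worm domain, where $\eta$ is smooth. Let $M(\rho) = -\det\begin{pmatrix}\rho & \rho_{\bar k}\\ \rho_j & \rho_{j\bar k}\end{pmatrix}$ be the Fefferman Monge–Ampère determinant. Assume $\eta$ and all its derivatives vanish on $[-\mu,\mu]$. Then on the critical annulus $\{(0,z_2) : |\log|z_2|^2| \le \mu\}$, one has $M(\rho)(0,z_2) = 0$. -/

import Mathlib

open Complex

/-- Wirtinger derivative `∂/∂z₁` of a function on `ℂ²`. -/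
noncomputable def wd1 (f : ℂ × ℂ → ℂ) (p : ℂ × ℂ) : ℂ :=
  (1 / 2) * (fderiv ℝ f p ((1 : ℂ), (0 : ℂ)) - Complex.I * fderiv ℝ f p (Complex.I, (0 : ℂ)))

/-- Wirtinger derivative `∂/∂z̄₁`. -/
noncomputable def wd1bar (f : ℂ × ℂ → ℂ) (p : ℂ × ℂ) : ℂ :=
  (1 / 2) * (fderiv ℝ f p ((1 : ℂ), (0 : ℂ)) + Complex.I * fderiv ℝ f p (Complex.I, (0 : ℂ)))

/-- Wirtinger derivative `∂/∂z₂`. -/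
noncomputable def wd2 (f : ℂ × ℂ → ℂ) (p : ℂ × ℂ) : ℂ :=
  (1 / 2) * (fderiv ℝ f p ((0 : ℂ), (1 : ℂ)) - Complex.I * fderiv ℝ f p ((0 : ℂ), Complex.I))

/-- Wirtinger derivative `∂/∂z̄₂`. -/
noncomputable def wd2bar (f : ℂ × ℂ → ℂ) (p : ℂ × ℂ) : ℂ :=
  (1 / 2) * (fderiv ℝ f p ((0 : ℂ), (1 : ℂ)) + Complex.I * fderiv ℝ f p ((0 : ℂ), Complex.I))

/-- Fefferman's Monge–Ampère determinant `M(ρ) = -det [[ρ, ρ_k̄],[ρ_j, ρ_{jk̄}]]`. -/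
noncomputable def feffermanMA (ρ : ℂ × ℂ → ℂ) (p : ℂ × ℂ) : ℂ :=
  -Matrix.det
    !![ρ p,      wd1bar ρ p,          wd2bar ρ p;
       wd1 ρ p,  wd1 (wd1bar ρ) p,    wd1 (wd2bar ρ) p;
       wd2 ρ p,  wd2 (wd1bar ρ) p,    wd2 (wd2bar ρ) p]

/-- The defining function of the worm domain `𝒲_μ`. -/
noncomputable def wormRho (η : ℝ → ℝ) (z : ℂ × ℂ) : ℂ :=
  ((‖z.1‖ ^ 2
      - 2 * (z.1 * Complex.exp (-Complex.I * (Real.log (‖z.2‖ ^ 2) : ℂ))).re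
      + η (Real.log (‖z.2‖ ^ 2)) : ℝ) : ℂ)

/-! ### Auxiliary machinery -/

@[fun_prop] lemma wd_diff_re (w : ℂ) : DifferentiableAt ℝ Complex.re w :=
  Complex.reCLM.differentiableAt

@[fun_prop] lemma wd_diff_im (w : ℂ) : DifferentiableAt ℝ Complex.im w :=
  Complex.imCLM.differentiableAt

@[fun_prop] lemma wd_diff_normSq (w : ℂ) : DifferentiableAt ℝ Complex.normSq w := by
  have h : (Complex.normSq : ℂ → ℝ) = fun w => w.re * w.re + w.im * w.im :=
    funext Complex.normSq_apply
  rw [h]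
  exact ((wd_diff_re w).mul (wd_diff_re w)).add ((wd_diff_im w).mul (wd_diff_im w))

@[fun_prop] lemma wd_diff_ofReal (x : ℝ) : DifferentiableAt ℝ (fun x : ℝ => (x : ℂ)) x :=
  Complex.ofRealCLM.differentiableAt

@[fun_prop] lemma wd_diff_conj (w : ℂ) : DifferentiableAt ℝ (starRingEnd ℂ) w :=
  Complex.conjCLE.differentiable.differentiableAt

/-- `log |w|²`. -/
noncomputable def Tf (w : ℂ) : ℝ := Real.log (Complex.normSq w)

/-- `exp (-i log |w|²)`. -/
noncomputable def Ef (w : ℂ) : ℂ := Complex.exp (-Complex.I * (Tf w : ℂ))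

lemma wormRho_eq (η : ℝ → ℝ) (z : ℂ × ℂ) :
    wormRho η z = ((Complex.normSq z.1 - 2 * (z.1 * Ef z.2).re + η (Tf z.2) : ℝ) : ℂ) := by
  simp [wormRho, Ef, Tf, Complex.sq_norm]

lemma hasDerivAt_T (z₂ v : ℂ) (h : z₂ ≠ 0) :
    HasDerivAt (fun s : ℝ => Tf (z₂ + s • v))
      ((Complex.normSq z₂)⁻¹ * (2 * ((starRingEnd ℂ) z₂ * v).re)) 0 := by
  set c : ℝ := 2 * ((starRingEnd ℂ) z₂ * v).re with hc
  have hN : HasDerivAt (fun s : ℝ => Complex.normSq (z₂ + s • v)) c 0 := by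
    have h1 : (fun s : ℝ => Complex.normSq (z₂ + s • v))
        = fun s => Complex.normSq z₂ + s * c + s ^ 2 * Complex.normSq v := by
      funext s
      simp only [Complex.normSq_apply, Complex.add_re, Complex.add_im, Complex.real_smul,
        Complex.mul_re, Complex.mul_im, Complex.ofReal_re, Complex.ofReal_im, hc,
        Complex.conj_re, Complex.conj_im]
      ring
    rw [h1]
    have h2 : HasDerivAt (fun s : ℝ => s * c) c 0 := by
      simpa using (hasDerivAt_id (0 : ℝ)).mul_const c
    have h3 : HasDerivAt (fun s : ℝ => s ^ 2 * Complex.normSq v) 0 0 := by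
      simpa using (hasDerivAt_pow 2 (0 : ℝ)).mul_const (Complex.normSq v)
    simpa [Pi.add_def] using (((h2.const_add (Complex.normSq z₂))).add h3)
  have hne : Complex.normSq (z₂ + (0 : ℝ) • v) ≠ 0 := by simpa using h
  have := (Real.hasDerivAt_log hne).comp 0 hN
  simpa [Tf, Function.comp_def] using this

lemma line_hasDerivAt (η : ℝ → ℝ) (hη : Differentiable ℝ η) (z₁ z₂ v : ℂ) (h : z₂ ≠ 0) :
    HasDerivAt
      (fun s : ℝ => ((Complex.normSq z₁ - 2 * (z₁ * Ef (z₂ + s • v)).re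
          + η (Tf (z₂ + s • v)) : ℝ) : ℂ))
      ((((Complex.normSq z₂)⁻¹ * (2 * ((starRingEnd ℂ) z₂ * v).re) : ℝ) : ℂ) *
        (Complex.I * z₁ * Ef z₂ - Complex.I * (starRingEnd ℂ) z₁ * (starRingEnd ℂ) (Ef z₂)
          + ((deriv η (Tf z₂) : ℝ) : ℂ))) 0 := by
  set c : ℝ := (Complex.normSq z₂)⁻¹ * (2 * ((starRingEnd ℂ) z₂ * v).re) with hcdef
  have h0 : z₂ + (0 : ℝ) • v = z₂ := by simp
  have hT : HasDerivAt (fun s : ℝ => Tf (z₂ + s • v)) c 0 := hasDerivAt_T z₂ v h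
  have hTc : HasDerivAt (fun s : ℝ => ((Tf (z₂ + s • v) : ℝ) : ℂ)) (c : ℂ) 0 := hT.ofReal_comp
  have hArg : HasDerivAt (fun s : ℝ => -Complex.I * (Tf (z₂ + s • v) : ℂ))
      (-Complex.I * (c : ℂ)) 0 := hTc.const_mul (-Complex.I)
  have hE : HasDerivAt (fun s : ℝ => Ef (z₂ + s • v)) (Ef z₂ * (-Complex.I * (c : ℂ))) 0 := by
    have := hArg.cexp
    simpa [Ef, h0] using this
  have hM : HasDerivAt (fun s : ℝ => z₁ * Ef (z₂ + s • v))
      (z₁ * (Ef z₂ * (-Complex.I * (c : ℂ)))) 0 := hE.const_mul z₁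
  have hRe : HasDerivAt (fun s : ℝ => (z₁ * Ef (z₂ + s • v)).re)
      ((z₁ * (Ef z₂ * (-Complex.I * (c : ℂ)))).re) 0 := by
    have := Complex.reCLM.hasFDerivAt.comp_hasDerivAt 0 hM
    simpa [Function.comp_def] using this
  have hd : HasDerivAt η (deriv η (Tf z₂)) (Tf (z₂ + (0 : ℝ) • v)) := by
    rw [h0]; exact (hη (Tf z₂)).hasDerivAt
  have hEta : HasDerivAt (fun s : ℝ => η (Tf (z₂ + s • v))) (deriv η (Tf z₂) * c) 0 :=
    hd.comp 0 hT
  have hG : HasDerivAt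
      (fun s : ℝ => Complex.normSq z₁ - 2 * (z₁ * Ef (z₂ + s • v)).re + η (Tf (z₂ + s • v)))
      (0 - 2 * (z₁ * (Ef z₂ * (-Complex.I * (c : ℂ)))).re + deriv η (Tf z₂) * c) 0 :=
    ((hasDerivAt_const 0 (Complex.normSq z₁)).sub (hRe.const_mul 2)).add hEta
  have hC := hG.ofReal_comp
  convert hC using 1
  have hre : ((2 * (z₁ * (Ef z₂ * (-Complex.I * (c : ℂ)))).re : ℝ) : ℂ)
      = z₁ * (Ef z₂ * (-Complex.I * (c : ℂ)))
        + (starRingEnd ℂ) (z₁ * (Ef z₂ * (-Complex.I * (c : ℂ)))) :=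
    (Complex.add_conj _).symm
  push_cast
  rw [show ((2:ℂ) * ((z₁ * (Ef z₂ * (-Complex.I * (c : ℂ)))).re : ℂ))
      = z₁ * (Ef z₂ * (-Complex.I * (c : ℂ)))
        + (starRingEnd ℂ) (z₁ * (Ef z₂ * (-Complex.I * (c : ℂ)))) from by
    rw [← hre]; push_cast; ring]
  simp only [map_mul, Complex.conj_I, Complex.conj_ofReal, map_neg]
  ring

lemma wormRho_differentiableAt (η : ℝ → ℝ) (hη : Differentiable ℝ η) (z : ℂ × ℂ)
    (h : z.2 ≠ 0) : DifferentiableAt ℝ (wormRho η) z := by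
  have hfun : wormRho η = fun z : ℂ × ℂ =>
      ((Complex.normSq z.1 - 2 * (z.1 * Ef z.2).re + η (Tf z.2) : ℝ) : ℂ) :=
    funext (wormRho_eq η)
  rw [hfun]
  have h2 : Complex.normSq z.2 ≠ 0 := by simpa using h
  unfold Ef Tf
  fun_prop (disch := assumption)

lemma fderiv_line {f : ℂ × ℂ → ℂ} {p : ℂ × ℂ} (d : ℂ × ℂ) (hf : DifferentiableAt ℝ f p)
    {c : ℂ} (h : HasDerivAt (fun s : ℝ => f (p + s • d)) c 0) : fderiv ℝ f p d = c := by
  have h1 : HasDerivAt (fun s : ℝ => p + s • d) d 0 := by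
    simpa using ((hasDerivAt_id (0 : ℝ)).smul_const d).const_add p
  have h0 : p + (0 : ℝ) • d = p := by simp
  have hf' : HasFDerivAt f (fderiv ℝ f p) ((fun s : ℝ => p + s • d) 0) := by
    simpa [h0] using hf.hasFDerivAt
  have h2 : HasDerivAt (fun s : ℝ => f (p + s • d)) (fderiv ℝ f p d) 0 :=
    hf'.comp_hasDerivAt 0 h1
  exact h2.unique h

lemma fderiv_wormRho_dir (η : ℝ → ℝ) (hη : Differentiable ℝ η) (z : ℂ × ℂ) (h : z.2 ≠ 0)
    (v : ℂ) :
    fderiv ℝ (wormRho η) z ((0 : ℂ), v)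
      = (((Complex.normSq z.2)⁻¹ * (2 * ((starRingEnd ℂ) z.2 * v).re) : ℝ) : ℂ) *
        (Complex.I * z.1 * Ef z.2 - Complex.I * (starRingEnd ℂ) z.1 * (starRingEnd ℂ) (Ef z.2)
          + ((deriv η (Tf z.2) : ℝ) : ℂ)) := by
  apply fderiv_line _ (wormRho_differentiableAt η hη z h)
  have hl := line_hasDerivAt η hη z.1 z.2 v h
  have hfun : (fun s : ℝ => wormRho η (z + s • ((0 : ℂ), v)))
      = fun s : ℝ => ((Complex.normSq z.1 - 2 * (z.1 * Ef (z.2 + s • v)).re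
          + η (Tf (z.2 + s • v)) : ℝ) : ℂ) := by
    funext s
    rw [show z + s • ((0 : ℂ), v) = (z.1, z.2 + s • v) by
      ext <;> simp [Prod.fst_add, Prod.snd_add]]
    rw [wormRho_eq]
  rw [hfun]
  exact hl

/-- The quantity `A(z) = i z₁ E - i z̄₁ Ē + η'(t)`. -/
noncomputable def Af (η : ℝ → ℝ) (z : ℂ × ℂ) : ℂ :=
  Complex.I * z.1 * Ef z.2 - Complex.I * (starRingEnd ℂ) z.1 * (starRingEnd ℂ) (Ef z.2)
    + ((deriv η (Tf z.2) : ℝ) : ℂ)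

lemma wd2_wormRho_eq (η : ℝ → ℝ) (hη : Differentiable ℝ η) (z : ℂ × ℂ) (h : z.2 ≠ 0) :
    wd2 (wormRho η) z = Af η z / z.2 := by
  rw [wd2, fderiv_wormRho_dir η hη z h 1, fderiv_wormRho_dir η hη z h Complex.I]
  set A := Af η z with hA
  rw [show Complex.I * z.1 * Ef z.2
      - Complex.I * (starRingEnd ℂ) z.1 * (starRingEnd ℂ) (Ef z.2)
      + ((deriv η (Tf z.2) : ℝ) : ℂ) = A from rfl]
  have hn : (Complex.normSq z.2 : ℂ) ≠ 0 := by
    simpa using h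
  have hmul : ((starRingEnd ℂ) z.2) * z.2 = (Complex.normSq z.2 : ℂ) := by
    rw [mul_comm]; exact Complex.mul_conj z.2
  have hre1 : ((starRingEnd ℂ) z.2 * 1).re = z.2.re := by simp
  have hreI : ((starRingEnd ℂ) z.2 * Complex.I).re = z.2.im := by
    simp [Complex.mul_re]
  rw [hre1, hreI, eq_div_iff h]
  push_cast
  have hnc : ((Complex.normSq z.2 : ℝ) : ℂ)
      = (z.2.re : ℂ) * (z.2.re : ℂ) + (z.2.im : ℂ) * (z.2.im : ℂ) := by
    rw [Complex.normSq_apply]; push_cast; ring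
  rw [hnc]
  set a : ℂ := (z.2.re : ℂ) with ha2
  set b : ℂ := (z.2.im : ℂ) with hb2
  have haab : a * a + b * b ≠ 0 := by rw [← hnc]; exact hn
  rw [show z.2 = a + b * Complex.I from (Complex.re_add_im z.2).symm]
  have haab' : a ^ 2 + b ^ 2 ≠ 0 := by rw [sq, sq]; exact haab
  field_simp
  linear_combination (-A * b ^ 2) * Complex.I_sq

lemma wd2bar_wormRho_eq (η : ℝ → ℝ) (hη : Differentiable ℝ η) (z : ℂ × ℂ) (h : z.2 ≠ 0) :
    wd2bar (wormRho η) z = Af η z / (starRingEnd ℂ) z.2 := by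
  rw [wd2bar, fderiv_wormRho_dir η hη z h 1, fderiv_wormRho_dir η hη z h Complex.I]
  set A := Af η z with hA
  rw [show Complex.I * z.1 * Ef z.2
      - Complex.I * (starRingEnd ℂ) z.1 * (starRingEnd ℂ) (Ef z.2)
      + ((deriv η (Tf z.2) : ℝ) : ℂ) = A from rfl]
  have hconj : (starRingEnd ℂ) z.2 ≠ 0 := by simpa using h
  have hmul : ((starRingEnd ℂ) z.2) * z.2 = (Complex.normSq z.2 : ℂ) := by
    rw [mul_comm]; exact Complex.mul_conj z.2
  have hre1 : ((starRingEnd ℂ) z.2 * 1).re = z.2.re := by simp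
  have hreI : ((starRingEnd ℂ) z.2 * Complex.I).re = z.2.im := by
    simp [Complex.mul_re]
  have hn : (Complex.normSq z.2 : ℂ) ≠ 0 := by simpa using h
  rw [hre1, hreI, eq_div_iff hconj]
  push_cast
  have hnc : ((Complex.normSq z.2 : ℝ) : ℂ)
      = (z.2.re : ℂ) * (z.2.re : ℂ) + (z.2.im : ℂ) * (z.2.im : ℂ) := by
    rw [Complex.normSq_apply]; push_cast; ring
  rw [hnc]
  set a : ℂ := (z.2.re : ℂ) with ha2
  set b : ℂ := (z.2.im : ℂ) with hb2
  have haab : a * a + b * b ≠ 0 := by rw [← hnc]; exact hn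
  rw [show (starRingEnd ℂ) z.2 = a - b * Complex.I from by
    simp [ha2, hb2, Complex.ext_iff]]
  have haab' : a ^ 2 + b ^ 2 ≠ 0 := by rw [sq, sq]; exact haab
  field_simp
  linear_combination (-A * b ^ 2) * Complex.I_sq

/-- On the critical annulus `{(0,z₂) : |log|z₂|²| ≤ μ}`, the Fefferman Monge–Ampère
determinant of the worm defining function vanishes. -/
theorem feffermanMA_worm_vanishes_on_annulus (μ : ℝ) (hμ : 0 < μ) (η : ℝ → ℝ)
    (hη : ContDiff ℝ (⊤ : ℕ∞) η)
    (hflat : ∀ (n : ℕ) (t : ℝ), |t| ≤ μ → iteratedDeriv n η t = 0) :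
    ∀ z₂ : ℂ, z₂ ≠ 0 → |Real.log (‖z₂‖ ^ 2)| ≤ μ →
      feffermanMA (wormRho η) ((0 : ℂ), z₂) = 0 := by
  intro z₂ hz₂ hann
  have hη1 : Differentiable ℝ η := (contDiff_infty_iff_deriv.mp (hη.of_le (by simp))).1
  have hηd : ContDiff ℝ (⊤ : ℕ∞) (deriv η) := (contDiff_infty_iff_deriv.mp (hη.of_le (by simp))).2
  have hη2 : Differentiable ℝ (deriv η) := (contDiff_infty_iff_deriv.mp hηd).1
  set p : ℂ × ℂ := ((0 : ℂ), z₂) with hp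
  have hps : p.2 = z₂ := rfl
  have hTann : |Tf z₂| ≤ μ := by rwa [Tf, ← Complex.sq_norm]
  have hη0 : η (Tf z₂) = 0 := by
    have := hflat 0 (Tf z₂) hTann; simpa [iteratedDeriv_zero] using this
  have hη1' : deriv η (Tf z₂) = 0 := by
    have := hflat 1 (Tf z₂) hTann; simpa [iteratedDeriv_one] using this
  have hη2' : deriv (deriv η) (Tf z₂) = 0 := by
    have := hflat 2 (Tf z₂) hTann
    rwa [iteratedDeriv_succ, iteratedDeriv_one] at this
  -- (a) ρ p = 0
  have ha : wormRho η p = 0 := by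
    rw [wormRho_eq]
    simp [hη0, hp]
  -- A at p
  have hAp : Af η p = 0 := by
    simp [Af, hη1', hp]
  -- (b) wd2 ρ p = 0
  have hb : wd2 (wormRho η) p = 0 := by
    rw [wd2_wormRho_eq η hη1 p hz₂, hAp, zero_div]
  -- (c) wd2bar ρ p = 0
  have hc : wd2bar (wormRho η) p = 0 := by
    rw [wd2bar_wormRho_eq η hη1 p hz₂, hAp, zero_div]
  -- (d) wd2 (wd2bar ρ) p = 0
  have hd : wd2 (wd2bar (wormRho η)) p = 0 := by
    set g : ℂ × ℂ → ℂ := fun z => Af η z / (starRingEnd ℂ) z.2 with hg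
    have hopen : IsOpen {z : ℂ × ℂ | z.2 ≠ 0} :=
      isOpen_ne.preimage continuous_snd
    have hev : wd2bar (wormRho η) =ᶠ[nhds p] g := by
      filter_upwards [hopen.mem_nhds (by exact hz₂ : p ∈ {z : ℂ × ℂ | z.2 ≠ 0})] with z hz
      exact wd2bar_wormRho_eq η hη1 z hz
    have hfd : fderiv ℝ (wd2bar (wormRho η)) p = fderiv ℝ g p := hev.fderiv_eq
    have hgd : DifferentiableAt ℝ g p := by
      have h2 : Complex.normSq p.2 ≠ 0 := by simpa using hz₂
      have h3 : (starRingEnd ℂ) p.2 ≠ 0 := by simpa using hz₂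
      have hnum : DifferentiableAt ℝ (fun z : ℂ × ℂ => Af η z) p := by
        unfold Af Ef Tf
        fun_prop (disch := assumption)
      have hden : DifferentiableAt ℝ (fun z : ℂ × ℂ => (starRingEnd ℂ) z.2) p := by fun_prop
      have hinv : DifferentiableAt ℝ (fun z : ℂ × ℂ => ((starRingEnd ℂ) z.2)⁻¹) p :=
        hden.inv h3
      have := hnum.mul hinv
      simpa [hg, div_eq_mul_inv, Pi.mul_def] using this
    have key : ∀ v : ℂ, fderiv ℝ g p ((0 : ℂ), v) = 0 := by
      intro v
      apply fderiv_line _ hgd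
      set c : ℝ := (Complex.normSq z₂)⁻¹ * (2 * ((starRingEnd ℂ) z₂ * v).re) with hcdef
      have hT : HasDerivAt (fun s : ℝ => Tf (z₂ + s • v)) c 0 := hasDerivAt_T z₂ v hz₂
      have h0 : z₂ + (0 : ℝ) • v = z₂ := by simp
      have hdd : HasDerivAt (deriv η) (deriv (deriv η) (Tf z₂)) (Tf (z₂ + (0 : ℝ) • v)) := by
        rw [h0]; exact (hη2 (Tf z₂)).hasDerivAt
      have hN : HasDerivAt (fun s : ℝ => ((deriv η (Tf (z₂ + s • v)) : ℝ) : ℂ))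
          ((deriv (deriv η) (Tf z₂) * c : ℝ) : ℂ) 0 := by
          have hcomp := hdd.comp 0 hT; exact hcomp.ofReal_comp
      have hDfun : (fun s : ℝ => (starRingEnd ℂ) (z₂ + s • v))
          = fun s : ℝ => (starRingEnd ℂ) z₂ + s • (starRingEnd ℂ) v := by
        funext s
        simp [map_add, Complex.real_smul]
      have hD : HasDerivAt (fun s : ℝ => (starRingEnd ℂ) (z₂ + s • v)) ((starRingEnd ℂ) v) 0 := by
        rw [hDfun]
        simpa using ((hasDerivAt_id (0 : ℝ)).smul_const ((starRingEnd ℂ) v)).const_add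
          ((starRingEnd ℂ) z₂)
      have hDne : (starRingEnd ℂ) (z₂ + (0 : ℝ) • v) ≠ 0 := by simpa [h0] using hz₂
      have hdiv := hN.div hD hDne
      have hzero : ((deriv (deriv η) (Tf z₂) * c : ℝ) : ℂ) * (starRingEnd ℂ) (z₂ + (0:ℝ) • v)
          - ((deriv η (Tf (z₂ + (0:ℝ) • v)) : ℝ) : ℂ) * (starRingEnd ℂ) v = 0 := by
        rw [h0, hη1', hη2']
        simp
      have hfun : (fun s : ℝ => g (p + s • ((0 : ℂ), v)))
          = fun s : ℝ => ((deriv η (Tf (z₂ + s • v)) : ℝ) : ℂ) / (starRingEnd ℂ) (z₂ + s • v) := by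
        funext s
        rw [show p + s • ((0 : ℂ), v) = ((0 : ℂ), z₂ + s • v) by
          ext <;> simp [hp]]
        simp [hg, Af]
      rw [hfun]
      refine hdiv.congr_deriv ?_
      rw [div_eq_zero_iff]
      exact Or.inl hzero
    have key1 := key 1
    have keyI := key Complex.I
    rw [wd2, hfd, key1, keyI]
    ring
  -- assemble the determinant
  rw [feffermanMA, Matrix.det_fin_three]
  simp [ha, hb, hc, hd]
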